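/- arXiv:0908.3167 — 6 statements merged into one kernel-verified Lean document; each statement's English description precedes it below -/
import Mathlib

section
/- Let R > 0, κ > 0, and let θ : I → ℝ be a differentiable function on an interval I satisfying θ'(t) = R sin θ(t) √(cos²θ(t) + κ²) for all t ∈ I. Define λ_θ(t) = R sin θ(t) (cos θ(t) + √(cos²θ(t) + κ²)) and λ_a = R κ²/2. Then λ_θ is differentiable and satisfies the adjoint equation λ_θ'(t) = λ_θ(t) R cos 2θ(t) + λ_a R sin 2θ(t) for all t ∈ I. -/
/-!
The costate is a function of `θ` alone, so by the chain rule `λ̇θ = (dλθ/dθ) θ̇`. Writing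
`s = √(cos²θ + κ²)`, one has `d/dθ (cos θ + s) = -sin θ (cos θ + s) / s`, and after this
substitution the adjoint equation reduces to `(cos θ + s)(s - cos θ) = s² - cos²θ = κ²`.
-/

open Real

-- `λθ = ω(θ)`, the optimal feedback law.
noncomputable def costate (R κ θ : ℝ) : ℝ :=
  R * sin θ * (cos θ + √(cos θ ^ 2 + κ ^ 2))

section

variable {κ : ℝ}

lemma sqrt_cos_sq_add_sq_pos (hκ : κ ≠ 0) (x : ℝ) : 0 < √(cos x ^ 2 + κ ^ 2) :=
  sqrt_pos.mpr (by positivity)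

lemma hasDerivAt_cos_add_sqrt_cos_sq_add_sq (hκ : κ ≠ 0) (x : ℝ) :
    HasDerivAt (fun y ↦ cos y + √(cos y ^ 2 + κ ^ 2))
      (-sin x * (cos x + √(cos x ^ 2 + κ ^ 2)) / √(cos x ^ 2 + κ ^ 2)) x := by
  have hs := (sqrt_cos_sq_add_sq_pos hκ x).ne'
  have hsqrt : HasDerivAt (fun y ↦ √(cos y ^ 2 + κ ^ 2))
      (2 * cos x ^ 1 * -sin x / (2 * √(cos x ^ 2 + κ ^ 2))) x :=
    (((hasDerivAt_cos x).pow 2).add_const (κ ^ 2)).sqrt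
      (by positivity : 0 < cos x ^ 2 + κ ^ 2).ne'
  refine ((hasDerivAt_cos x).add hsqrt).congr_deriv ?_
  field_simp
  ring

lemma hasDerivAt_costate (R : ℝ) (hκ : κ ≠ 0) (x : ℝ) :
    HasDerivAt (costate R κ)
      (R * (cos x + √(cos x ^ 2 + κ ^ 2)) * (cos x - sin x ^ 2 / √(cos x ^ 2 + κ ^ 2))) x := by
  refine (((hasDerivAt_sin x).const_mul R).mul
    (hasDerivAt_cos_add_sqrt_cos_sq_add_sq hκ x)).congr_deriv ?_
  ring

lemma costate_deriv_mul_speed (R : ℝ) (hκ : κ ≠ 0) (x : ℝ) :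
    R * (cos x + √(cos x ^ 2 + κ ^ 2)) * (cos x - sin x ^ 2 / √(cos x ^ 2 + κ ^ 2))
        * (R * sin x * √(cos x ^ 2 + κ ^ 2))
      = costate R κ x * R * cos (2 * x) + R * κ ^ 2 / 2 * R * sin (2 * x) := by
  have hs := (sqrt_cos_sq_add_sq_pos hκ x).ne'
  have hs2 : √(cos x ^ 2 + κ ^ 2) ^ 2 = cos x ^ 2 + κ ^ 2 := sq_sqrt (by positivity)
  calc _ = R ^ 2 * sin x * (cos x + √(cos x ^ 2 + κ ^ 2))
          * ((cos x - sin x ^ 2 / √(cos x ^ 2 + κ ^ 2)) * √(cos x ^ 2 + κ ^ 2)) := by ring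
    _ = R ^ 2 * sin x * (cos x + √(cos x ^ 2 + κ ^ 2))
          * (cos x * √(cos x ^ 2 + κ ^ 2) - sin x ^ 2) := by field_simp
    _ = _ := by
      rw [costate, cos_two_mul, sin_two_mul]
      linear_combination R ^ 2 * sin x * cos x * hs2
        - R ^ 2 * sin x * (cos x + √(cos x ^ 2 + κ ^ 2)) * sin_sq_add_cos_sq x

end

theorem stmt_4_general (R κ lam_a : ℝ) (hκ : 0 < κ)
    (hlam_a : lam_a = R * κ ^ 2 / 2)
    (I : Set ℝ) (θ : ℝ → ℝ)
    (hθ : ∀ t ∈ I, HasDerivWithinAt θ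
      (R * Real.sin (θ t) * Real.sqrt (Real.cos (θ t) ^ 2 + κ ^ 2)) I t)
    (lθ : ℝ → ℝ)
    (hlθ : ∀ t, lθ t
      = R * Real.sin (θ t) * (Real.cos (θ t) + Real.sqrt (Real.cos (θ t) ^ 2 + κ ^ 2))) :
    ∀ t ∈ I, HasDerivWithinAt lθ
      (lθ t * R * Real.cos (2 * θ t) + lam_a * R * Real.sin (2 * θ t)) I t := by
  intro t ht
  have hlθ_comp : lθ = costate R κ ∘ θ := funext hlθ
  subst hlam_a hlθ_comp
  exact ((hasDerivAt_costate R hκ.ne' (θ t)).comp_hasDerivWithinAt t (hθ t ht)).congr_deriv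
    (costate_deriv_mul_speed R hκ.ne' (θ t))

/-- Along the optimal trajectory `θ̇ = R sin θ √(cos²θ + κ²)`, the costate
`λθ = R sin θ (cos θ + √(cos²θ + κ²))` satisfies the adjoint equation
`λ̇θ = λθ R cos 2θ + λa R sin 2θ` with `λa = R κ²/2`. -/
theorem stmt_4 (R κ lam_a : ℝ) (hR : 0 < R) (hκ : 0 < κ)
    (hlam_a : lam_a = R * κ ^ 2 / 2)
    (I : Set ℝ) (hI : I.OrdConnected) (θ : ℝ → ℝ)
    (hθ : ∀ t ∈ I, HasDerivWithinAt θ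
      (R * Real.sin (θ t) * Real.sqrt (Real.cos (θ t) ^ 2 + κ ^ 2)) I t)
    (lθ : ℝ → ℝ)
    (hlθ : ∀ t, lθ t
      = R * Real.sin (θ t) * (Real.cos (θ t) + Real.sqrt (Real.cos (θ t) ^ 2 + κ ^ 2))) :
    ∀ t ∈ I, HasDerivWithinAt lθ
      (lθ t * R * Real.cos (2 * θ t) + lam_a * R * Real.sin (2 * θ t)) I t :=
  stmt_4_general R κ lam_a hκ hlam_a I θ hθ lθ hlθ
end

section
/- Let 0 < r < 1 and set κ = 2r/(1 − r²). Then ∫_0^{π/2} (sin θ / √(cos²θ + κ²)) dθ = ln(1/r). Moreover, κ = 2r/(1 − r²) is the unique positive number with this property. -/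
open Real

/-! An antiderivative of `sin θ / √(cos²θ + κ²)` is `-arsinh (cos θ / κ)`, so the integral over
`[0, π/2]` is `arsinh (1/κ)`. Since `sinh (ln (1/r)) = (1/r - r)/2 = (1 - r²)/(2r)`, the constraint
reads `1/κ = (1 - r²)/(2r)`, and injectivity of `arsinh` gives uniqueness. -/

lemma hasDerivAt_neg_arsinh_cos_div {κ : ℝ} (hκ : 0 < κ) (θ : ℝ) :
    HasDerivAt (fun t => -arsinh (cos t / κ)) (sin θ / √(cos θ ^ 2 + κ ^ 2)) θ := by
  have hsqrt : √(1 + (cos θ / κ) ^ 2) = √(cos θ ^ 2 + κ ^ 2) / κ := by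
    rw [show 1 + (cos θ / κ) ^ 2 = (cos θ ^ 2 + κ ^ 2) / κ ^ 2 by field_simp; ring,
      sqrt_div (by positivity), sqrt_sq hκ.le]
  refine ((hasDerivAt_arsinh _).comp θ ((hasDerivAt_cos θ).div_const κ)).neg.congr_deriv ?_
  have : √(cos θ ^ 2 + κ ^ 2) ≠ 0 := by positivity
  rw [hsqrt]
  field_simp

lemma integral_sin_div_sqrt_cos_sq_add_sq {κ : ℝ} (hκ : 0 < κ) :
    ∫ θ in (0 : ℝ)..(π / 2), sin θ / √(cos θ ^ 2 + κ ^ 2) = arsinh (1 / κ) := by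
  have hcont : Continuous fun θ => sin θ / √(cos θ ^ 2 + κ ^ 2) :=
    continuous_sin.div (by fun_prop) fun θ => by positivity
  rw [intervalIntegral.integral_eq_sub_of_hasDerivAt
    (fun θ _ => hasDerivAt_neg_arsinh_cos_div hκ θ) (hcont.intervalIntegrable _ _)]
  simp

lemma sinh_log_one_div {r : ℝ} (hr : 0 < r) (hr1 : r < 1) :
    sinh (log (1 / r)) = 1 / (2 * r / (1 - r ^ 2)) := by
  have : 1 - r ^ 2 ≠ 0 := by nlinarith
  rw [sinh_log (by positivity)]
  field_simp

/-- For the optimal π/2 pulse, `κ = 2r/(1 - r²)` satisfies the magnetization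
loss constraint `∫₀^{π/2} sin θ/√(cos²θ + κ²) dθ = ln(1/r)`, and it is the
unique positive number with this property. -/
theorem stmt_6 (r κ : ℝ) (hr : 0 < r) (hr1 : r < 1) (hκ : κ = 2 * r / (1 - r ^ 2)) :
    (∫ θ in (0 : ℝ)..(π / 2), Real.sin θ / Real.sqrt (Real.cos θ ^ 2 + κ ^ 2))
        = Real.log (1 / r) ∧
      ∀ κ' : ℝ, 0 < κ' →
        (∫ θ in (0 : ℝ)..(π / 2), Real.sin θ / Real.sqrt (Real.cos θ ^ 2 + κ' ^ 2))
            = Real.log (1 / r) →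
          κ' = κ := by
  have hκ_pos : 0 < κ := by
    rw [hκ]
    exact div_pos (by positivity) (by nlinarith)
  have hlog : log (1 / r) = arsinh (1 / κ) := by
    rw [hκ, ← sinh_log_one_div hr hr1, arsinh_sinh]
  refine ⟨by rw [integral_sin_div_sqrt_cos_sq_add_sq hκ_pos, hlog], fun κ' hκ' hint => ?_⟩
  rw [integral_sin_div_sqrt_cos_sq_add_sq hκ', hlog] at hint
  simpa using arsinh_injective hint
end

section
/- Let R > 0, 0 < r < 1, and κ = 2r/(1 − r²). Then the energy of the optimal π/2 pulse, expressed as an integral over the polar angle, satisfies ∫_0^{π/2} [R sin θ (cos θ + √(cos²θ + κ²))]² / (2 R sin θ √(cos²θ + κ²)) dθ = R/(1 − r²). -/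
/-!
With `q θ = √(cos² θ + κ²)`, the integrand simplifies to `R sin θ (cos θ + q)² / (2q)`,
which is the derivative of `-(R/2) (cos² θ + cos θ · q)` because `q² = cos² θ + κ²`.
The integral is therefore `(R/2) (1 + √(1 + κ²))`, and for `κ = 2r/(1 - r²)` one has
`√(1 + κ²) = (1 + r²)/(1 - r²)`.
-/

open Real

lemma mul_mul_sq_div_two_mul_mul {K : Type*} [Field K] (a b x q : K) :
    (a * b * x) ^ 2 / (2 * a * b * q) = a * b * x ^ 2 / (2 * q) := by
  rcases eq_or_ne (a * b) 0 with hab | hab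
  · simp [hab, mul_assoc]
  · rw [show 2 * a * b * q = a * b * (2 * q) by ring, mul_pow, sq (a * b), mul_assoc,
      mul_div_mul_left _ _ hab]

lemma sqrt_one_add_sq_two_mul_div {r : ℝ} (hr : r ^ 2 < 1) :
    √(1 + (2 * r / (1 - r ^ 2)) ^ 2) = (1 + r ^ 2) / (1 - r ^ 2) := by
  have hr' : 0 < 1 - r ^ 2 := sub_pos.2 hr
  rw [← sqrt_sq (by positivity : 0 ≤ (1 + r ^ 2) / (1 - r ^ 2))]
  congr 1
  field_simp
  ring

section PulseEnergy

variable (R : ℝ) {κ : ℝ} (hκ : κ ≠ 0)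
include hκ

lemma hasDerivAt_pulseEnergy_primitive (θ : ℝ) :
    HasDerivAt (fun θ => -(R / 2) * (cos θ ^ 2 + cos θ * √(cos θ ^ 2 + κ ^ 2)))
      (R * sin θ * (cos θ + √(cos θ ^ 2 + κ ^ 2)) ^ 2 / (2 * √(cos θ ^ 2 + κ ^ 2))) θ := by
  have hcos_sq : HasDerivAt (fun x => cos x ^ 2) (2 * cos θ * -sin θ) θ := by
    simpa using (hasDerivAt_cos θ).fun_pow 2
  have hq_deriv : HasDerivAt (fun x => √(cos x ^ 2 + κ ^ 2))
      (2 * cos θ * -sin θ / (2 * √(cos θ ^ 2 + κ ^ 2))) θ :=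
    (hcos_sq.add_const _).sqrt (by positivity)
  refine ((hcos_sq.fun_add ((hasDerivAt_cos θ).fun_mul hq_deriv)).const_mul
    (-(R / 2))).congr_deriv ?_
  field_simp
  ring

theorem integral_pulseEnergy :
    ∫ θ in (0 : ℝ)..(π / 2),
        (R * sin θ * (cos θ + √(cos θ ^ 2 + κ ^ 2))) ^ 2
          / (2 * R * sin θ * √(cos θ ^ 2 + κ ^ 2))
      = R / 2 * (1 + √(1 + κ ^ 2)) := by
  simp_rw [mul_mul_sq_div_two_mul_mul]
  have hcont : Continuous fun θ =>
      R * sin θ * (cos θ + √(cos θ ^ 2 + κ ^ 2)) ^ 2 / (2 * √(cos θ ^ 2 + κ ^ 2)) := by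
    fun_prop (disch := intro; positivity)
  rw [intervalIntegral.integral_eq_sub_of_hasDerivAt
    (fun θ _ => hasDerivAt_pulseEnergy_primitive R hκ θ) (hcont.intervalIntegrable _ _)]
  simp only [cos_pi_div_two, cos_zero, one_pow, zero_pow two_ne_zero, zero_mul, add_zero, one_mul]
  ring

end PulseEnergy

theorem stmt_8_general (R r κ : ℝ) (hr : 0 < r) (hr1 : r < 1)
    (hκ : κ = 2 * r / (1 - r ^ 2)) :
    ∫ θ in (0 : ℝ)..(π / 2),
        (R * Real.sin θ * (Real.cos θ + Real.sqrt (Real.cos θ ^ 2 + κ ^ 2))) ^ 2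
          / (2 * R * Real.sin θ * Real.sqrt (Real.cos θ ^ 2 + κ ^ 2))
      = R / (1 - r ^ 2) := by
  have hr2 : r ^ 2 < 1 := by nlinarith
  have hκ0 : κ ≠ 0 := by
    have := sub_pos.2 hr2
    rw [hκ]
    positivity
  rw [integral_pulseEnergy R hκ0, hκ, sqrt_one_add_sq_two_mul_div hr2]
  have := (sub_pos.2 hr2).ne'
  field_simp
  ring

/-- The energy of the optimal π/2 pulse:
`∫₀^{π/2} [R sin θ (cos θ + √(cos²θ + κ²))]² / (2 R sin θ √(cos²θ + κ²)) dθ = R/(1 - r²)`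
with `κ = 2r/(1 - r²)`. -/
theorem stmt_8 (R r κ : ℝ) (hR : 0 < R) (hr : 0 < r) (hr1 : r < 1)
    (hκ : κ = 2 * r / (1 - r ^ 2)) :
    ∫ θ in (0 : ℝ)..(π / 2),
        (R * Real.sin θ * (Real.cos θ + Real.sqrt (Real.cos θ ^ 2 + κ ^ 2))) ^ 2
          / (2 * R * Real.sin θ * Real.sqrt (Real.cos θ ^ 2 + κ ^ 2))
      = R / (1 - r ^ 2) :=
  stmt_8_general R r κ hr hr1 hκ
end

section
/- Let R > 0, 0 < r < 1, and κ = 2√r/(1 − r). Then the energy of the optimal π pulse, expressed as an integral over the polar angle, satisfies ∫_0^{π} [R sin θ (cos θ + √(cos²θ + κ²))]² / (2 R sin θ √(cos²θ + κ²)) dθ = R (1 + r)/(1 − r). -/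
/-!
Dividing out, the integrand is `R sin θ · g(cos θ)` with `g u = (u + √(u² + κ²))² / (2√(u² + κ²))`,
so the substitution `u = cos θ` turns the energy into `R ∫₋₁¹ g`. Since
`(u √(u² + κ²))' = (2u² + κ²)/√(u² + κ²)`, the function `g` has the primitive
`(u √(u² + κ²) + u²)/2`, whence `∫₋₁¹ g = √(1 + κ²)`; for `κ = 2√r/(1 - r)` this is
`(1 + r)/(1 - r)`.
-/

open Real intervalIntegral

lemma sq_mul_div_mul_eq (R x y z : ℝ) :
    (R * x * y) ^ 2 / (2 * R * x * z) = R * (x * (y ^ 2 / (2 * z))) := by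
  rcases eq_or_ne R 0 with rfl | hR
  · simp
  rcases eq_or_ne x 0 with rfl | hx
  · simp
  rcases eq_or_ne z 0 with rfl | hz
  · simp
  field_simp

lemma integral_sin_mul_comp_cos {f : ℝ → ℝ} (hf : Continuous f) :
    ∫ θ in (0 : ℝ)..π, sin θ * f (cos θ) = ∫ u in (-1 : ℝ)..1, f u := by
  have h := integral_comp_mul_deriv (a := 0) (b := π) (fun θ _ => hasDerivAt_cos θ)
    continuous_sin.neg.continuousOn hf
  rw [cos_zero, cos_pi, integral_symm (-1)] at h
  simp only [Function.comp_apply, mul_neg, integral_neg, neg_inj] at h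
  simpa only [mul_comm] using h

lemma hasDerivAt_mul_sqrt_sq_add_sq_add_sq_div_two {κ : ℝ} (hκ : κ ≠ 0) (u : ℝ) :
    HasDerivAt (fun u => (u * √(u ^ 2 + κ ^ 2) + u ^ 2) / 2)
      ((u + √(u ^ 2 + κ ^ 2)) ^ 2 / (2 * √(u ^ 2 + κ ^ 2))) u := by
  have hpos : 0 < u ^ 2 + κ ^ 2 := by positivity
  have hs : √(u ^ 2 + κ ^ 2) ≠ 0 := (sqrt_pos.2 hpos).ne'
  have hpow : HasDerivAt (fun u : ℝ => u ^ 2) (2 * u) u := by simpa using hasDerivAt_pow 2 u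
  have hsqrt : HasDerivAt (fun u => √(u ^ 2 + κ ^ 2)) (2 * u / (2 * √(u ^ 2 + κ ^ 2))) u :=
    (hpow.add_const _).sqrt hpos.ne'
  refine ((((hasDerivAt_id' u).fun_mul hsqrt).fun_add hpow).div_const 2).congr_deriv ?_
  field_simp
  ring

lemma continuous_sq_add_sqrt_div_sqrt {κ : ℝ} (hκ : κ ≠ 0) :
    Continuous fun u : ℝ => (u + √(u ^ 2 + κ ^ 2)) ^ 2 / (2 * √(u ^ 2 + κ ^ 2)) :=
  Continuous.div (by fun_prop) (by fun_prop) fun u => by positivity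

lemma integral_sq_add_sqrt_div_sqrt {κ : ℝ} (hκ : κ ≠ 0) :
    ∫ u in (-1 : ℝ)..1, (u + √(u ^ 2 + κ ^ 2)) ^ 2 / (2 * √(u ^ 2 + κ ^ 2)) = √(1 + κ ^ 2) := by
  rw [integral_eq_sub_of_hasDerivAt (fun u _ => hasDerivAt_mul_sqrt_sq_add_sq_add_sq_div_two hκ u)
    ((continuous_sq_add_sqrt_div_sqrt hκ).intervalIntegrable _ _)]
  norm_num
  ring

lemma sqrt_one_add_sq_two_mul_sqrt_div {r : ℝ} (hr : 0 ≤ r) (hr1 : r < 1) :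
    √(1 + (2 * √r / (1 - r)) ^ 2) = (1 + r) / (1 - r) := by
  have h1r : 0 < 1 - r := by linarith
  rw [sqrt_eq_iff_eq_sq (by positivity) (by positivity), div_pow, mul_pow, sq_sqrt hr]
  field_simp
  ring

theorem stmt_9_general (R r κ : ℝ) (hr : 0 < r) (hr1 : r < 1)
    (hκ : κ = 2 * Real.sqrt r / (1 - r)) :
    ∫ θ in (0 : ℝ)..π,
        (R * Real.sin θ * (Real.cos θ + Real.sqrt (Real.cos θ ^ 2 + κ ^ 2))) ^ 2
          / (2 * R * Real.sin θ * Real.sqrt (Real.cos θ ^ 2 + κ ^ 2))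
      = R * (1 + r) / (1 - r) := by
  have hκ0 : κ ≠ 0 := by
    have : 0 < 1 - r := by linarith
    rw [hκ]
    exact (div_pos (mul_pos two_pos (sqrt_pos.2 hr)) this).ne'
  simp_rw [sq_mul_div_mul_eq R]
  rw [integral_const_mul, integral_sin_mul_comp_cos (continuous_sq_add_sqrt_div_sqrt hκ0),
    integral_sq_add_sqrt_div_sqrt hκ0, hκ, sqrt_one_add_sq_two_mul_sqrt_div hr.le hr1, mul_div_assoc]

/-- The energy of the optimal π pulse:
`∫₀^{π} [R sin θ (cos θ + √(cos²θ + κ²))]² / (2 R sin θ √(cos²θ + κ²)) dθ = R(1 + r)/(1 - r)`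
with `κ = 2√r/(1 - r)`. -/
theorem stmt_9 (R r κ : ℝ) (hR : 0 < R) (hr : 0 < r) (hr1 : r < 1)
    (hκ : κ = 2 * Real.sqrt r / (1 - r)) :
    ∫ θ in (0 : ℝ)..π,
        (R * Real.sin θ * (Real.cos θ + Real.sqrt (Real.cos θ ^ 2 + κ ^ 2))) ^ 2
          / (2 * R * Real.sin θ * Real.sqrt (Real.cos θ ^ 2 + κ ^ 2))
      = R * (1 + r) / (1 - r) :=
  stmt_9_general R r κ hr hr1 hκ
end

section
/- Let R > 0, 0 < r < 1, and κ = 2r/(1 − r²). Then the duration T(ε) = ∫_ε^{π/2} dθ / (R sin θ √(cos²θ + κ²)) of the optimal π/2 pulse started at θ(0) = ε satisfies lim_{ε → 0⁺} [ T(ε) + (1/R)·((1 − r²)/(1 + r²))·ln ε ] = (1/R)·((1 − r²)/(1 + r²))·ln((1 + r²)/r). In other words, T(ε) = (1/R)((1 − r²)/(1 + r²))[ln((1 + r²)/r) − ln ε] + o(1) as ε → 0⁺. -/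
/-!
With `s = √(1 + κ²)`, the function `P θ = log (sin θ) - log (√(cos² θ + κ²) + s cos θ)` satisfies
`P' = s / (sin θ √(cos² θ + κ²))` on every interval where `sin` does not vanish, so
`T(ε) = (P (π/2) - P ε) / (R s)`. Since `P (π/2) = -log κ` and
`log ε - P ε = log (√(cos² ε + κ²) + s cos ε) - log (sinc ε) → log (2 s)`, the quantity
`T(ε) + log ε / (R s)` tends to `log (2 s / κ) / (R s)`; for `κ = 2r/(1 - r²)` one has
`s = (1 + r²)/(1 - r²)` and `2 s / κ = (1 + r²)/r`.
-/

open Real Filter Set Topology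

noncomputable def pulsePotential (κ θ : ℝ) : ℝ :=
  log (sin θ) - log (√(cos θ ^ 2 + κ ^ 2) + cos θ * √(1 + κ ^ 2))

section

variable {κ θ : ℝ}

-- `(cos² θ + κ²) - (1 + κ²) cos² θ = κ² sin² θ`
theorem sqrt_one_add_sq_mul_abs_cos_lt (hκ : κ ≠ 0) (hθ : sin θ ≠ 0) :
    √(1 + κ ^ 2) * |cos θ| < √(cos θ ^ 2 + κ ^ 2) := by
  rw [← sqrt_sq_eq_abs, ← sqrt_mul (by positivity)]
  refine sqrt_lt_sqrt (by positivity) ?_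
  have : 0 < κ ^ 2 * sin θ ^ 2 := by positivity
  nlinarith [sin_sq_add_cos_sq θ]

theorem sqrt_cos_sq_add_sq_add_cos_mul_pos (hκ : κ ≠ 0) (hθ : sin θ ≠ 0) :
    0 < √(cos θ ^ 2 + κ ^ 2) + cos θ * √(1 + κ ^ 2) := by
  nlinarith [sqrt_one_add_sq_mul_abs_cos_lt hκ hθ, neg_abs_le (cos θ), sqrt_nonneg (1 + κ ^ 2)]

theorem hasDerivAt_pulsePotential (hκ : κ ≠ 0) (hθ : sin θ ≠ 0) :
    HasDerivAt (pulsePotential κ) (√(1 + κ ^ 2) / (sin θ * √(cos θ ^ 2 + κ ^ 2))) θ := by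
  have hpos : 0 < cos θ ^ 2 + κ ^ 2 := by positivity
  have hA : HasDerivAt (fun x => √(cos x ^ 2 + κ ^ 2))
      (2 * cos θ * -sin θ / (2 * √(cos θ ^ 2 + κ ^ 2))) θ := by
    convert (((hasDerivAt_cos θ).fun_pow 2).add_const (κ ^ 2)).sqrt hpos.ne' using 2
    ring
  have hB := (hA.fun_add ((hasDerivAt_cos θ).mul_const √(1 + κ ^ 2))).log
    (sqrt_cos_sq_add_sq_add_cos_mul_pos hκ hθ).ne'
  refine (((hasDerivAt_sin θ).log hθ).fun_sub hB).congr_deriv ?_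
  have hA2 : √(cos θ ^ 2 + κ ^ 2) ^ 2 = cos θ ^ 2 + κ ^ 2 := sq_sqrt hpos.le
  have hs2 : √(1 + κ ^ 2) ^ 2 = 1 + κ ^ 2 := sq_sqrt (by positivity)
  have := (sqrt_pos.2 hpos).ne'
  have := (sqrt_cos_sq_add_sq_add_cos_mul_pos hκ hθ).ne'
  field_simp
  linear_combination (cos θ + √(1 + κ ^ 2) * √(cos θ ^ 2 + κ ^ 2)) * sin_sq_add_cos_sq θ
    + cos θ * hA2 - cos θ * hs2

end

theorem integral_one_div_mul_sin_mul_sqrt (R : ℝ) {κ a b : ℝ} (hκ : κ ≠ 0)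
    (ha : a ∈ Ioo 0 π) (hb : b ∈ Ioo 0 π) :
    ∫ θ in a..b, 1 / (R * sin θ * √(cos θ ^ 2 + κ ^ 2)) =
      (pulsePotential κ b - pulsePotential κ a) / (R * √(1 + κ ^ 2)) := by
  have hsin : ∀ θ ∈ uIcc a b, sin θ ≠ 0 := fun θ hθ =>
    (sin_pos_of_mem_Ioo (ordConnected_Ioo.uIcc_subset ha hb hθ)).ne'
  have hs : √(1 + κ ^ 2) ≠ 0 := (sqrt_pos.2 (by positivity)).ne'
  have hsplit : ∀ θ, 1 / (R * sin θ * √(cos θ ^ 2 + κ ^ 2)) =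
      1 / (R * √(1 + κ ^ 2)) * (√(1 + κ ^ 2) / (sin θ * √(cos θ ^ 2 + κ ^ 2))) := by
    intro θ
    rw [div_mul_div_comm, one_mul, show R * √(1 + κ ^ 2) * (sin θ * √(cos θ ^ 2 + κ ^ 2)) =
      √(1 + κ ^ 2) * (R * sin θ * √(cos θ ^ 2 + κ ^ 2)) by ring, div_mul_cancel_left₀ hs, one_div]
  have hcont : ContinuousOn (fun θ => √(1 + κ ^ 2) / (sin θ * √(cos θ ^ 2 + κ ^ 2))) (uIcc a b) :=
    continuousOn_const.div (by fun_prop) fun θ hθ =>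
      mul_ne_zero (hsin θ hθ) (sqrt_pos.2 (by positivity)).ne'
  simp_rw [hsplit, intervalIntegral.integral_const_mul]
  rw [intervalIntegral.integral_eq_sub_of_hasDerivAt
    (fun θ hθ => hasDerivAt_pulsePotential hκ (hsin θ hθ)) hcont.intervalIntegrable]
  ring

theorem tendsto_log_sub_pulsePotential (κ : ℝ) :
    Tendsto (fun ε => log ε - pulsePotential κ ε) (𝓝[>] 0) (𝓝 (log (2 * √(1 + κ ^ 2)))) := by
  have hs : 0 < √(1 + κ ^ 2) := sqrt_pos.2 (by positivity)
  have hcont : ContinuousAt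
      (fun ε => log (√(cos ε ^ 2 + κ ^ 2) + cos ε * √(1 + κ ^ 2)) - log (sinc ε)) 0 := by
    refine ContinuousAt.sub (.log (by fun_prop) ?_) (.log continuous_sinc.continuousAt ?_)
    · simp [hs.ne']
    · simp
  have hlim := hcont.tendsto.mono_left (nhdsWithin_le_nhds (s := Ioi 0))
  rw [cos_zero, one_pow, one_mul, ← two_mul, sinc_zero, log_one, sub_zero] at hlim
  refine hlim.congr' ?_
  filter_upwards [Ioo_mem_nhdsGT pi_pos] with ε hε
  rw [sinc_of_ne_zero hε.1.ne', log_div (sin_pos_of_mem_Ioo hε).ne' hε.1.ne', pulsePotential]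
  ring

theorem stmt_10_general (R r κ : ℝ) (hr : 0 < r) (hr1 : r < 1)
    (hκ : κ = 2 * r / (1 - r ^ 2)) :
    Filter.Tendsto
      (fun ε : ℝ =>
        (∫ θ in ε..(π / 2),
            1 / (R * Real.sin θ * Real.sqrt (Real.cos θ ^ 2 + κ ^ 2)))
          + (1 / R) * ((1 - r ^ 2) / (1 + r ^ 2)) * Real.log ε)
      (nhdsWithin 0 (Set.Ioi 0))
      (nhds ((1 / R) * ((1 - r ^ 2) / (1 + r ^ 2)) * Real.log ((1 + r ^ 2) / r))) := by
  have h1r : 0 < 1 - r ^ 2 := by nlinarith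
  have hκpos : 0 < κ := hκ ▸ by positivity
  have hs : √(1 + κ ^ 2) = (1 + r ^ 2) / (1 - r ^ 2) := by
    rw [sqrt_eq_iff_eq_sq (by positivity) (by positivity), hκ]
    field_simp
    ring
  have hcoef : 1 / (R * √(1 + κ ^ 2)) = 1 / R * ((1 - r ^ 2) / (1 + r ^ 2)) := by
    rw [hs, ← one_div_mul_one_div, one_div_div]
  have hlog : log (2 * √(1 + κ ^ 2)) - log κ = log ((1 + r ^ 2) / r) := by
    rw [← log_div (by positivity) hκpos.ne', hs, hκ]
    field_simp
  have hP : pulsePotential κ (π / 2) = -log κ := by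
    simp [pulsePotential, sqrt_sq hκpos.le]
  have hπ : π / 2 ∈ Ioo 0 π := ⟨half_pos pi_pos, half_lt_self pi_pos⟩
  rw [← hcoef, ← hlog]
  refine (((tendsto_log_sub_pulsePotential κ).sub_const (log κ)).const_mul _).congr' ?_
  filter_upwards [Ioo_mem_nhdsGT hπ.1] with ε hε
  rw [integral_one_div_mul_sin_mul_sqrt R hκpos.ne' ⟨hε.1, hε.2.trans hπ.2⟩ hπ, hP]
  ring

/-- Asymptotics of the duration of the optimal π/2 pulse:
`T(ε) = (1/R)((1-r²)/(1+r²))[ln((1+r²)/r) - ln ε] + o(1)` as `ε → 0⁺`, i.e.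
`T(ε) + (1/R)((1-r²)/(1+r²)) ln ε → (1/R)((1-r²)/(1+r²)) ln((1+r²)/r)`. -/
theorem stmt_10 (R r κ : ℝ) (hR : 0 < R) (hr : 0 < r) (hr1 : r < 1)
    (hκ : κ = 2 * r / (1 - r ^ 2)) :
    Filter.Tendsto
      (fun ε : ℝ =>
        (∫ θ in ε..(π / 2),
            1 / (R * Real.sin θ * Real.sqrt (Real.cos θ ^ 2 + κ ^ 2)))
          + (1 / R) * ((1 - r ^ 2) / (1 + r ^ 2)) * Real.log ε)
      (nhdsWithin 0 (Set.Ioi 0))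
      (nhds ((1 / R) * ((1 - r ^ 2) / (1 + r ^ 2)) * Real.log ((1 + r ^ 2) / r))) :=
  stmt_10_general R r κ hr hr1 hκ
end

section
/- Let R > 0, 0 < r < 1, and κ = 2√r/(1 − r). Then the duration T(ε) = ∫_ε^{π−ε} dθ / (R sin θ √(cos²θ + κ²)) of the optimal π pulse started at θ(0) = ε and ended at θ(T) = π − ε satisfies lim_{ε → 0⁺} [ T(ε) + (2/R)·((1 − r)/(1 + r))·ln ε ] = (1/R)·((1 − r)/(1 + r))·ln((1 + r)²/r). In other words, T(ε) = (1/R)((1 − r)/(1 + r))[ln((1 + r)²/r) − 2 ln ε] + o(1) as ε → 0⁺. -/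
open Real Filter

/-!
Put `s = (1 + r) / (1 - r)`, so that `κ² = s² - 1`, and `q θ = √(cos² θ + κ²)`. Then
`(q - s cos θ) (q + s cos θ) = κ² sin² θ > 0` on `(0, π)`, and
`F θ = (log (q - s cos θ) - log (q + s cos θ)) / (2 R s)` is an explicit antiderivative of the
integrand there. As `F (π - θ) = - F θ`, the duration is
`T(ε) = -2 F ε = (2 / (R s)) (log (q + s cos ε) - log κ - log sin ε)`.
Writing `log sin ε = log ε + log (sinc ε)` makes `T(ε) + (2 / (R s)) log ε` continuous at `ε = 0`,
with value `(2 / (R s)) log (2 s / κ) = (1/R) ((1 - r)/(1 + r)) log ((1 + r)² / r)`.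
-/

noncomputable def pulseAntideriv (R s κ θ : ℝ) : ℝ :=
  (log (√(cos θ ^ 2 + κ ^ 2) - cos θ * s) - log (√(cos θ ^ 2 + κ ^ 2) + cos θ * s)) / (2 * R * s)

section

variable {R s κ : ℝ}

lemma mul_conj_sqrt_cos_sq_add (hκ : κ ^ 2 = s ^ 2 - 1) (θ : ℝ) :
    (√(cos θ ^ 2 + κ ^ 2) - cos θ * s) * (√(cos θ ^ 2 + κ ^ 2) + cos θ * s) =
      κ ^ 2 * sin θ ^ 2 := by
  have hq : √(cos θ ^ 2 + κ ^ 2) ^ 2 = cos θ ^ 2 + κ ^ 2 := sq_sqrt (by positivity)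
  linear_combination hq + cos θ ^ 2 * hκ - κ ^ 2 * sin_sq_add_cos_sq θ

lemma abs_cos_mul_lt_sqrt (hκ : κ ^ 2 = s ^ 2 - 1) (hκ0 : κ ≠ 0) {θ : ℝ} (hθ : sin θ ≠ 0) :
    |cos θ * s| < √(cos θ ^ 2 + κ ^ 2) := by
  rw [lt_sqrt (abs_nonneg _), sq_abs]
  have : 0 < κ ^ 2 * sin θ ^ 2 := by positivity
  linear_combination (exp := 1) this - cos θ ^ 2 * hκ + κ ^ 2 * sin_sq_add_cos_sq θ

lemma log_sqrt_sub_cos_mul (hκ : κ ^ 2 = s ^ 2 - 1) (hκ0 : κ ≠ 0) {θ : ℝ} (hθ : sin θ ≠ 0) :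
    log (√(cos θ ^ 2 + κ ^ 2) - cos θ * s) =
      2 * log κ + 2 * log (sin θ) - log (√(cos θ ^ 2 + κ ^ 2) + cos θ * s) := by
  obtain ⟨hN, hD⟩ := abs_lt.mp (abs_cos_mul_lt_sqrt hκ hκ0 hθ)
  rw [eq_sub_iff_add_eq, ← log_mul (by linarith) (by linarith), mul_conj_sqrt_cos_sq_add hκ,
    log_mul (by positivity) (by positivity), log_pow, log_pow]
  push_cast
  ring

lemma pulseAntideriv_pi_sub (θ : ℝ) : pulseAntideriv R s κ (π - θ) = -pulseAntideriv R s κ θ := by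
  simp only [pulseAntideriv, cos_pi_sub, neg_sq, neg_mul, sub_neg_eq_add, ← sub_eq_add_neg]
  ring

lemma hasDerivAt_pulseAntideriv (hR : R ≠ 0) (hs : s ≠ 0) (hκ : κ ^ 2 = s ^ 2 - 1)
    (hκ0 : κ ≠ 0) {θ : ℝ} (hθ : sin θ ≠ 0) :
    HasDerivAt (pulseAntideriv R s κ) (1 / (R * sin θ * √(cos θ ^ 2 + κ ^ 2))) θ := by
  have hq : √(cos θ ^ 2 + κ ^ 2) ^ 2 = cos θ ^ 2 + κ ^ 2 := sq_sqrt (by positivity)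
  obtain ⟨hN, hD⟩ := abs_lt.mp (abs_cos_mul_lt_sqrt hκ hκ0 hθ)
  have hsqrt : HasDerivAt (fun t => √(cos t ^ 2 + κ ^ 2))
      (-(cos θ * sin θ) / √(cos θ ^ 2 + κ ^ 2)) θ := by
    convert (((hasDerivAt_cos θ).fun_pow 2).add_const (κ ^ 2)).sqrt (by positivity) using 1
    field_simp
    ring
  have hcos := (hasDerivAt_cos θ).mul_const s
  have hlogD := (hsqrt.fun_sub hcos).log (by linarith)
  have hlogN := (hsqrt.fun_add hcos).log (by linarith)
  refine ((hlogD.fun_sub hlogN).div_const (2 * R * s)).congr_deriv ?_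
  have hprod := mul_conj_sqrt_cos_sq_add hκ θ
  generalize √(cos θ ^ 2 + κ ^ 2) = q at *
  have hq0 : q ≠ 0 := by linarith
  have hD' : q - cos θ * s ≠ 0 := by linarith
  have hN' : q + cos θ * s ≠ 0 := by linarith
  field_simp
  linear_combination 2 * s * sin θ ^ 2 * hq - 2 * s * hprod

lemma integral_eq_neg_two_mul_pulseAntideriv (hR : R ≠ 0) (hs : s ≠ 0)
    (hκ : κ ^ 2 = s ^ 2 - 1) (hκ0 : κ ≠ 0) {ε : ℝ} (hε : 0 < ε) (hε' : ε ≤ π / 2) :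
    ∫ θ in ε..π - ε, 1 / (R * sin θ * √(cos θ ^ 2 + κ ^ 2)) = -2 * pulseAntideriv R s κ ε := by
  have hsin : ∀ θ ∈ Set.uIcc ε (π - ε), sin θ ≠ 0 := fun θ hθ => by
    rw [Set.uIcc_of_le (by linarith)] at hθ
    exact (sin_pos_of_pos_of_lt_pi (by linarith [hθ.1]) (by linarith [hθ.2])).ne'
  rw [intervalIntegral.integral_eq_sub_of_hasDerivAt
    (fun θ hθ => hasDerivAt_pulseAntideriv hR hs hκ hκ0 (hsin θ hθ)), pulseAntideriv_pi_sub]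
  · ring
  · refine ContinuousOn.intervalIntegrable fun θ hθ => ContinuousAt.continuousWithinAt ?_
    have hq : √(cos θ ^ 2 + κ ^ 2) ≠ 0 := by positivity
    exact continuousAt_const.div (by fun_prop : Continuous _).continuousAt
      (mul_ne_zero (mul_ne_zero hR (hsin θ hθ)) hq)

lemma tendsto_integral_add_log (hR : R ≠ 0) (hs : 0 < s) (hκ : κ ^ 2 = s ^ 2 - 1)
    (hκ0 : κ ≠ 0) :
    Tendsto (fun ε => (∫ θ in ε..π - ε, 1 / (R * sin θ * √(cos θ ^ 2 + κ ^ 2))) +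
        2 / (R * s) * log ε)
      (nhdsWithin 0 (Set.Ioi 0)) (nhds (2 / (R * s) * log (2 * s / κ))) := by
  have hval : √(cos 0 ^ 2 + κ ^ 2) + cos 0 * s = 2 * s := by
    rw [cos_zero, one_pow, show 1 + κ ^ 2 = s ^ 2 by linarith, sqrt_sq hs.le]
    ring
  have hcont : ContinuousAt (fun ε => 2 / (R * s) *
      (log (√(cos ε ^ 2 + κ ^ 2) + cos ε * s) - log κ - log (sinc ε))) 0 :=
    ((((by fun_prop : Continuous fun ε => √(cos ε ^ 2 + κ ^ 2) + cos ε * s).continuousAt.log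
      (by rw [hval]; positivity)).sub continuousAt_const).sub
      (continuous_sinc.continuousAt.log (by simp))).const_mul _
  have hlim := hcont.tendsto
  simp only [hval, sinc_zero, log_one, sub_zero, ← log_div (by positivity : 2 * s ≠ 0) hκ0]
    at hlim
  refine (hlim.mono_left nhdsWithin_le_nhds).congr' ?_
  filter_upwards [Ioo_mem_nhdsGT pi_div_two_pos] with ε ⟨hε, hε'⟩
  have hsin : 0 < sin ε := sin_pos_of_pos_of_lt_pi hε (by linarith [pi_pos])
  rw [integral_eq_neg_two_mul_pulseAntideriv hR hs.ne' hκ hκ0 hε hε'.le, pulseAntideriv,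
    log_sqrt_sub_cos_mul hκ hκ0 hsin.ne', sinc_of_ne_zero hε.ne', log_div hsin.ne' hε.ne']
  field_simp
  ring

end

/-- Asymptotics of the duration of the optimal π pulse:
`T(ε) = (1/R)((1-r)/(1+r))[ln((1+r)²/r) - 2 ln ε] + o(1)` as `ε → 0⁺`, i.e.
`T(ε) + (2/R)((1-r)/(1+r)) ln ε → (1/R)((1-r)/(1+r)) ln((1+r)²/r)`. -/
theorem stmt_11 (R r κ : ℝ) (hR : 0 < R) (hr : 0 < r) (hr1 : r < 1)
    (hκ : κ = 2 * Real.sqrt r / (1 - r)) :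
    Filter.Tendsto
      (fun ε : ℝ =>
        (∫ θ in ε..(π - ε),
            1 / (R * Real.sin θ * Real.sqrt (Real.cos θ ^ 2 + κ ^ 2)))
          + (2 / R) * ((1 - r) / (1 + r)) * Real.log ε)
      (nhdsWithin 0 (Set.Ioi 0))
      (nhds ((1 / R) * ((1 - r) / (1 + r)) * Real.log ((1 + r) ^ 2 / r))) := by
  have h1r : 0 < 1 - r := by linarith
  set s := (1 + r) / (1 - r) with hs
  have hκ0 : 0 < κ := hκ ▸ by positivity
  have hκsq : κ ^ 2 = 4 * r / (1 - r) ^ 2 := by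
    rw [hκ, div_pow, mul_pow, sq_sqrt hr.le]
    norm_num
  have hκ2 : κ ^ 2 = s ^ 2 - 1 := by
    rw [hκsq, hs]
    field_simp
    ring
  have hcoef : 2 / R * ((1 - r) / (1 + r)) = 2 / (R * s) := by
    rw [hs]
    field_simp
  have hlimit : 1 / R * ((1 - r) / (1 + r)) * log ((1 + r) ^ 2 / r) =
      2 / (R * s) * log (2 * s / κ) := by
    have hsq : (1 + r) ^ 2 / r = (2 * s / κ) ^ 2 := by
      rw [div_pow, hκsq, hs]
      field_simp
      norm_num
    rw [hsq, log_pow, ← hcoef]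
    push_cast
    ring
  rw [hcoef, hlimit]
  exact tendsto_integral_add_log hR.ne' (by positivity) hκ2 hκ0.ne'
end
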